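/- arXiv:2402.04621 — 6 statements merged into one kernel-verified Lean document; each statement's English description precedes it below -/
import Mathlib

section
/- The upper bound 1 of the normalized graph-level CFH is attained: there exists a finite simple graph G without isolated nodes, together with node features and class labels, such that d(v_i, N_i) = 0 and b(v_i) > 0 for every node v_i, and consequently h̃^(v)_i = 1 for all v_i and h̃^(G) = 1. -/
open Finset

/-- The class-controlled feature `(X_i | Y)` of node `i`: its feature minus the mean
feature of the nodes of its class. -/
noncomputable def ccf {V : Type*} [Fintype V] [DecidableEq V] {k c : ℕ}
    (X : V → EuclideanSpace ℝ (Fin k)) (Y : V → Fin c) (i : V) :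
    EuclideanSpace ℝ (Fin k) :=
  X i - ((Finset.univ.filter fun j => Y j = Y i).card : ℝ)⁻¹ •
    ∑ j ∈ Finset.univ.filter fun j => Y j = Y i, X j

/-- `d(v_i, V')`: mean Euclidean distance between the class-controlled feature of `i`
and those of the nodes in `S`. -/
noncomputable def dFun {V : Type*} [Fintype V] [DecidableEq V] {k c : ℕ}
    (X : V → EuclideanSpace ℝ (Fin k)) (Y : V → Fin c) (i : V) (S : Finset V) : ℝ :=
  (S.card : ℝ)⁻¹ * ∑ j ∈ S, ‖ccf X Y i - ccf X Y j‖

/-- The homophily baseline `b(v_i) = d(v_i, V \ {v_i})`. -/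
noncomputable def bFun {V : Type*} [Fintype V] [DecidableEq V] {k c : ℕ}
    (X : V → EuclideanSpace ℝ (Fin k)) (Y : V → Fin c) (i : V) : ℝ :=
  dFun X Y i (Finset.univ.erase i)

open scoped Classical in
/-- The neighbor finset `N_i` of node `i` in the graph `G`. -/
noncomputable def nbr {V : Type*} [Fintype V] (G : SimpleGraph V) (i : V) : Finset V :=
  Finset.univ.filter fun j => G.Adj i j

/-- `d(v_i, N_i)`: mean distance from `i` to its neighbors. -/
noncomputable def dN {V : Type*} [Fintype V] [DecidableEq V] {k c : ℕ}
    (G : SimpleGraph V) (X : V → EuclideanSpace ℝ (Fin k)) (Y : V → Fin c) (i : V) : ℝ :=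
  dFun X Y i (nbr G i)

/-- Unnormalized node-level CFH `h^(v)_i = b(v_i) - d(v_i, N_i)`. -/
noncomputable def hv {V : Type*} [Fintype V] [DecidableEq V] {k c : ℕ}
    (G : SimpleGraph V) (X : V → EuclideanSpace ℝ (Fin k)) (Y : V → Fin c) (i : V) : ℝ :=
  bFun X Y i - dN G X Y i

/-- Normalized node-level CFH `h̃^(v)_i = h^(v)_i / max(b(v_i), d(v_i, N_i))`
(equal to `0` when the denominator vanishes, by the convention `x / 0 = 0`). -/
noncomputable def hvNorm {V : Type*} [Fintype V] [DecidableEq V] {k c : ℕ}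
    (G : SimpleGraph V) (X : V → EuclideanSpace ℝ (Fin k)) (Y : V → Fin c) (i : V) : ℝ :=
  hv G X Y i / max (bFun X Y i) (dN G X Y i)

/-- Unnormalized graph-level CFH `h^(G)`, the mean of the node-level CFH values. -/
noncomputable def hG {V : Type*} [Fintype V] [DecidableEq V] {k c : ℕ}
    (G : SimpleGraph V) (X : V → EuclideanSpace ℝ (Fin k)) (Y : V → Fin c) : ℝ :=
  (Fintype.card V : ℝ)⁻¹ * ∑ i, hv G X Y i

/-- Normalized graph-level CFH
`h̃^(G) = h^(G) / ((1/|V|) max(Σ_i b(v_i), Σ_i d(v_i, N_i)))`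
(equal to `0` when the denominator vanishes, by the convention `x / 0 = 0`). -/
noncomputable def hGNorm {V : Type*} [Fintype V] [DecidableEq V] {k c : ℕ}
    (G : SimpleGraph V) (X : V → EuclideanSpace ℝ (Fin k)) (Y : V → Fin c) : ℝ :=
  hG G X Y /
    ((Fintype.card V : ℝ)⁻¹ * max (∑ i, bFun X Y i) (∑ i, dN G X Y i))

/-! The four nodes form two edges `{0, 1}` and `{2, 3}`, labelled alternately by two classes,
with scalar features `-1, -1, 1, 1`. Each class holds one `-1` and one `1`, so its mean is zero
and the class-controlled features are the raw features. Both endpoints of an edge carry the same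
feature, so `d(v, N_v) = 0`, while the node two steps away carries the opposite one, so
`b(v) > 0`. -/

theorem mem_nbr {V : Type*} [Fintype V] {G : SimpleGraph V} {i j : V} :
    j ∈ nbr G i ↔ G.Adj i j := by
  simp [nbr]

theorem nbr_nonempty_iff {V : Type*} [Fintype V] {G : SimpleGraph V} {i : V} :
    (nbr G i).Nonempty ↔ ∃ j, G.Adj i j := by
  simp only [Finset.Nonempty, mem_nbr]

section CFH

variable {V : Type*} [Fintype V] [DecidableEq V] {k c : ℕ}
  (X : V → EuclideanSpace ℝ (Fin k)) (Y : V → Fin c)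

theorem ccf_eq_self_of_sum_class_eq_zero
    (hX : ∀ i, ∑ j ∈ univ.filter fun j => Y j = Y i, X j = 0) (i : V) : ccf X Y i = X i := by
  rw [ccf, hX, smul_zero, sub_zero]

theorem dFun_eq_zero_of_forall_ccf_eq {i : V} {S : Finset V}
    (hS : ∀ j ∈ S, ccf X Y j = ccf X Y i) : dFun X Y i S = 0 := by
  rw [dFun, Finset.sum_eq_zero fun j hj => by rw [hS j hj, sub_self, norm_zero], mul_zero]

theorem dFun_pos_of_ccf_ne {i j : V} {S : Finset V} (hj : j ∈ S)
    (hne : ccf X Y j ≠ ccf X Y i) : 0 < dFun X Y i S := by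
  have hcard : (0 : ℝ) < S.card := by exact_mod_cast Finset.card_pos.mpr ⟨j, hj⟩
  have hsum : 0 < ∑ l ∈ S, ‖ccf X Y i - ccf X Y l‖ :=
    Finset.sum_pos' (fun _ _ => norm_nonneg _) ⟨j, hj, norm_pos_iff.mpr (sub_ne_zero.mpr hne.symm)⟩
  exact mul_pos (inv_pos.mpr hcard) hsum

theorem bFun_pos_of_ccf_ne {i j : V} (hij : j ≠ i) (hne : ccf X Y j ≠ ccf X Y i) :
    0 < bFun X Y i :=
  dFun_pos_of_ccf_ne X Y (Finset.mem_erase.mpr ⟨hij, Finset.mem_univ j⟩) hne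

variable {X Y} (G : SimpleGraph V)

theorem hvNorm_eq_one {i : V} (hd : dN G X Y i = 0) (hb : 0 < bFun X Y i) :
    hvNorm G X Y i = 1 := by
  rw [hvNorm, hv, hd, sub_zero, max_eq_left hb.le, div_self hb.ne']

theorem hGNorm_eq_one [Nonempty V] (hd : ∀ i, dN G X Y i = 0) (hb : ∀ i, 0 < bFun X Y i) :
    hGNorm G X Y = 1 := by
  have hsum : 0 < ∑ i, bFun X Y i := Finset.sum_pos (fun i _ => hb i) Finset.univ_nonempty
  have hcard : (Fintype.card V : ℝ)⁻¹ ≠ 0 := by simp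
  simp only [hGNorm, hG, hv, hd, sub_zero, Finset.sum_const_zero, max_eq_left hsum.le]
  exact div_self (mul_ne_zero hcard hsum.ne')

end CFH

namespace PairExample

def graph : SimpleGraph (Fin 4) := SimpleGraph.fromRel fun i j => i.val / 2 = j.val / 2

def label : Fin 4 → Fin 2 := ![0, 1, 0, 1]

noncomputable def feature (i : Fin 4) : EuclideanSpace ℝ (Fin 1) :=
  ((-1 : ℝ) ^ (i.val / 2)) • EuclideanSpace.single 0 1

theorem exists_adj (i : Fin 4) : ∃ j, graph.Adj i j := by
  revert i
  simp only [graph, SimpleGraph.fromRel_adj]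
  decide

theorem feature_eq_of_adj {i j : Fin 4} (h : graph.Adj i j) : feature i = feature j := by
  rw [graph, SimpleGraph.fromRel_adj] at h
  rw [feature, feature, h.2.elim id Eq.symm]

theorem feature_add_two (i : Fin 4) : feature (i + 2) = -feature i := by
  fin_cases i <;> simp [feature, Fin.add_def]

theorem filter_label_eq (i : Fin 4) : univ.filter (fun j => label j = label i) = {i, i + 2} := by
  fin_cases i <;> decide

theorem sum_class_feature_eq_zero (i : Fin 4) :
    ∑ j ∈ univ.filter fun j => label j = label i, feature j = 0 := by
  rw [filter_label_eq, Finset.sum_pair (by fin_cases i <;> decide), feature_add_two,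
    add_neg_cancel]

theorem ccf_eq (i : Fin 4) : ccf feature label i = feature i :=
  ccf_eq_self_of_sum_class_eq_zero _ _ sum_class_feature_eq_zero i

theorem dN_eq_zero (i : Fin 4) : dN graph feature label i = 0 :=
  dFun_eq_zero_of_forall_ccf_eq _ _ fun j hj => by
    rw [ccf_eq, ccf_eq]
    exact (feature_eq_of_adj (mem_nbr.mp hj)).symm

theorem bFun_pos (i : Fin 4) : 0 < bFun feature label i := by
  refine bFun_pos_of_ccf_ne _ _ (j := i + 2) (by fin_cases i <;> decide) ?_
  rw [ccf_eq, ccf_eq, feature_add_two]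
  intro h
  have h0 := congrArg (· 0) h
  simp [feature] at h0
  exact pow_ne_zero _ (by norm_num : (-1 : ℝ) ≠ 0) (by linarith)

end PairExample

/-- Lemma 3.1, attainment of the upper bound. There is a finite simple
graph without isolated nodes, with node features and class labels, in which every node
has zero mean distance to its neighbors but positive homophily baseline; consequently
every normalized node-level CFH equals `1` and the normalized graph-level CFH equals `1`. -/
theorem graph_level_CFH_sup_attained :
    ∃ (n k c : ℕ) (G : SimpleGraph (Fin n)) (X : Fin n → EuclideanSpace ℝ (Fin k))
      (Y : Fin n → Fin c),
      (∀ v, (nbr G v).Nonempty) ∧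
      (∀ v, dN G X Y v = 0 ∧ 0 < bFun X Y v) ∧
      (∀ v, hvNorm G X Y v = 1) ∧
      hGNorm G X Y = 1 :=
  open PairExample in
  ⟨4, 1, 2, graph, feature, label,
    fun v => nbr_nonempty_iff.mpr (exists_adj v),
    fun v => ⟨dN_eq_zero v, bFun_pos v⟩,
    fun v => hvNorm_eq_one graph (dN_eq_zero v) (bFun_pos v),
    hGNorm_eq_one graph dN_eq_zero bFun_pos⟩
end

section
/- The lower bound −1 of the normalized graph-level CFH is tight as an infimum: for every ε > 0 there exists a finite simple graph G without isolated nodes, together with node features and class labels, such that h̃^(G) < −1 + ε; hence the infimum of h̃^(G) over all such graphs equals −1. -/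
open Finset

section

variable {V : Type*} [Fintype V] [DecidableEq V] {k c : ℕ}
  (X : V → EuclideanSpace ℝ (Fin k)) (Y : V → Fin c)

theorem ccf_sub_ccf_of_eq {i j : V} (h : Y i = Y j) : ccf X Y i - ccf X Y j = X i - X j := by
  simp only [ccf, h]
  abel

theorem dFun_nonneg (i : V) (S : Finset V) : 0 ≤ dFun X Y i S := by
  unfold dFun
  positivity

theorem dFun_eq_of_forall_norm_eq {i : V} {S : Finset V} {r : ℝ} (hS : S.Nonempty)
    (h : ∀ j ∈ S, ‖ccf X Y i - ccf X Y j‖ = r) : dFun X Y i S = r := by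
  rw [dFun, sum_congr rfl h, sum_const, nsmul_eq_mul, ← mul_assoc,
    inv_mul_cancel₀ (by exact_mod_cast hS.card_pos.ne'), one_mul]

theorem hGNorm_eq_sub_div_max (G : SimpleGraph V) :
    hGNorm G X Y = (∑ i, bFun X Y i - ∑ i, dN G X Y i) /
      max (∑ i, bFun X Y i) (∑ i, dN G X Y i) := by
  rcases isEmpty_or_nonempty V with hV | hV
  · simp [hGNorm, hG]
  · rw [hGNorm, hG, mul_div_mul_left _ _ (by positivity), ← sum_sub_distrib]
    rfl

theorem neg_one_le_sub_div_max {a b : ℝ} (ha : 0 ≤ a) :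
    -1 ≤ (a - b) / max a b := by
  rcases (le_max_of_le_left ha).eq_or_lt with h | h
  · rw [← h, div_zero]
    norm_num
  · rw [le_div_iff₀ h]
    linarith [le_max_right a b]

theorem neg_one_le_hGNorm (G : SimpleGraph V) : -1 ≤ hGNorm G X Y := by
  rw [hGNorm_eq_sub_div_max]
  exact neg_one_le_sub_div_max (sum_nonneg fun i _ => dFun_nonneg X Y i _)

end

section

open SimpleGraph

variable {V : Type*} [Fintype V] [DecidableEq V] (r : V)

noncomputable def starFeature : V → EuclideanSpace ℝ (Fin 1) :=
  Pi.single r (EuclideanSpace.single 0 1)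

def oneClass : V → Fin 1 := fun _ => 0

theorem norm_ccf_starFeature_sub (i j : V) :
    ‖ccf (starFeature r) oneClass i - ccf (starFeature r) oneClass j‖ =
      if (i = r ↔ j = r) then 0 else 1 := by
  rw [ccf_sub_ccf_of_eq _ _ (Subsingleton.elim _ _), starFeature]
  by_cases hi : i = r <;> by_cases hj : j = r <;>
    simp [hi, hj, PiLp.norm_single]

theorem nbr_starGraph_nonempty [Nontrivial V] (i : V) : (nbr (starGraph r) i).Nonempty := by
  by_cases hi : i = r
  · obtain ⟨j, hj⟩ := exists_ne r
    exact ⟨j, mem_nbr.2 (by simp [hi, hj.symm])⟩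
  · exact ⟨r, mem_nbr.2 (by simp [hi])⟩

theorem dN_starGraph [Nontrivial V] (i : V) :
    dN (starGraph r) (starFeature r) oneClass i = 1 := by
  refine dFun_eq_of_forall_norm_eq _ _ (nbr_starGraph_nonempty r i) fun j hj => ?_
  rw [norm_ccf_starFeature_sub]
  grind [mem_nbr, starGraph_adj]

theorem sum_dN_starGraph [Nontrivial V] :
    ∑ i, dN (starGraph r) (starFeature r) oneClass i = Fintype.card V := by
  simp [dN_starGraph]

theorem bFun_starFeature_center [Nontrivial V] : bFun (starFeature r) oneClass r = 1 :=
  dFun_eq_of_forall_norm_eq _ _ (univ_nontrivial.erase_nonempty) fun j hj => by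
    simp [norm_ccf_starFeature_sub, ne_of_mem_erase hj]

theorem bFun_starFeature_of_ne {i : V} (hi : i ≠ r) :
    bFun (starFeature r) oneClass i = ((Fintype.card V : ℝ) - 1)⁻¹ := by
  have hr : r ∈ univ.erase i := mem_erase.2 ⟨hi.symm, mem_univ r⟩
  rw [bFun, dFun,
    sum_eq_single_of_mem r hr fun j _ hj => by simp [norm_ccf_starFeature_sub, hi, hj],
    card_erase_of_mem (mem_univ i), card_univ, Nat.cast_pred (Fintype.card_pos_iff.2 ⟨i⟩)]
  simp [norm_ccf_starFeature_sub, hi]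

theorem sum_bFun_starFeature [Nontrivial V] : ∑ i, bFun (starFeature r) oneClass i = 2 := by
  have hcard : (Fintype.card V : ℝ) - 1 ≠ 0 :=
    sub_ne_zero.2 (by exact_mod_cast (Fintype.one_lt_card (α := V)).ne')
  rw [← add_sum_erase _ _ (mem_univ r), bFun_starFeature_center,
    sum_congr rfl fun i hi => bFun_starFeature_of_ne r (ne_of_mem_erase hi), sum_const,
    card_erase_of_mem (mem_univ r), card_univ, nsmul_eq_mul, Nat.cast_pred Fintype.card_pos,
    mul_inv_cancel₀ hcard]
  norm_num

theorem hGNorm_starGraph [Nontrivial V] :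
    hGNorm (starGraph r) (starFeature r) oneClass = 2 / Fintype.card V - 1 := by
  have hcard : (2 : ℝ) ≤ Fintype.card V := by exact_mod_cast Fintype.one_lt_card (α := V)
  rw [hGNorm_eq_sub_div_max, sum_bFun_starFeature, sum_dN_starGraph, max_eq_right hcard]
  field_simp

end

theorem exists_hGNorm_lt {ε : ℝ} (hε : 0 < ε) :
    ∃ (n k c : ℕ) (G : SimpleGraph (Fin n)) (X : Fin n → EuclideanSpace ℝ (Fin k))
      (Y : Fin n → Fin c), (∀ v, (nbr G v).Nonempty) ∧ hGNorm G X Y < -1 + ε := by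
  obtain ⟨m, hm⟩ := exists_nat_gt (2 / ε)
  refine ⟨m + 2, 1, 1, SimpleGraph.starGraph 0, starFeature 0, oneClass,
    nbr_starGraph_nonempty 0, ?_⟩
  have hlt : 2 / ((m + 2 : ℕ) : ℝ) < ε := by
    rw [div_lt_iff₀ hε] at hm
    rw [div_lt_iff₀ (by positivity)]
    push_cast
    linarith
  rw [hGNorm_starGraph, Fintype.card_fin]
  linarith

/-- Lemma 3.1, tightness of the lower bound. For every `ε > 0` there is
a finite simple graph without isolated nodes, with node features and class labels, whose
normalized graph-level CFH is below `-1 + ε`; hence the infimum of the normalized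
graph-level CFH over all such graphs equals `-1`. -/
theorem graph_level_CFH_inf_tight :
    (∀ ε : ℝ, 0 < ε →
      ∃ (n k c : ℕ) (G : SimpleGraph (Fin n)) (X : Fin n → EuclideanSpace ℝ (Fin k))
        (Y : Fin n → Fin c),
        (∀ v, (nbr G v).Nonempty) ∧ hGNorm G X Y < -1 + ε) ∧
    sInf {x : ℝ | ∃ (n k c : ℕ) (G : SimpleGraph (Fin n))
        (X : Fin n → EuclideanSpace ℝ (Fin k)) (Y : Fin n → Fin c),
        (∀ v, (nbr G v).Nonempty) ∧ x = hGNorm G X Y} = -1 := by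
  refine ⟨fun ε hε => exists_hGNorm_lt hε, ?_⟩
  apply csInf_eq_of_forall_ge_of_forall_gt_exists_lt
  · obtain ⟨n, k, c, G, X, Y, hG, -⟩ := exists_hGNorm_lt one_pos
    exact ⟨_, n, k, c, G, X, Y, hG, rfl⟩
  · rintro _ ⟨n, k, c, G, X, Y, -, rfl⟩
    exact neg_one_le_hGNorm X Y G
  · intro w hw
    obtain ⟨n, k, c, G, X, Y, hG, hlt⟩ := exists_hGNorm_lt (show 0 < w + 1 by linarith)
    exact ⟨_, ⟨n, k, c, G, X, Y, hG, rfl⟩, by linarith⟩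
end

section
/- Scale-invariance at the node level: for every finite simple graph G without isolated nodes, with node features X and class labels Y, and for every real scalar c ≠ 0, the normalized node-level CFH computed with the scaled features cX equals the one computed with X, i.e., h̃^(v)_i(cX) = h̃^(v)_i(X) for every node v_i. -/
open Finset

section ScaleInvariance

variable {V : Type*} [Fintype V] [DecidableEq V] {k c : ℕ}

lemma ccf_smul (X : V → EuclideanSpace ℝ (Fin k)) (Y : V → Fin c) (r : ℝ) (i : V) :
    ccf (fun j => r • X j) Y i = r • ccf X Y i := by
  simp only [ccf, ← Finset.smul_sum, smul_sub, smul_comm r]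

lemma dFun_smul (X : V → EuclideanSpace ℝ (Fin k)) (Y : V → Fin c) (r : ℝ) (i : V)
    (S : Finset V) : dFun (fun j => r • X j) Y i S = |r| * dFun X Y i S := by
  simp only [dFun, ccf_smul, ← smul_sub, norm_smul, Real.norm_eq_abs, ← Finset.mul_sum]
  ring

lemma bFun_smul (X : V → EuclideanSpace ℝ (Fin k)) (Y : V → Fin c) (r : ℝ) (i : V) :
    bFun (fun j => r • X j) Y i = |r| * bFun X Y i :=
  dFun_smul X Y r i _

lemma dN_smul (G : SimpleGraph V) (X : V → EuclideanSpace ℝ (Fin k)) (Y : V → Fin c)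
    (r : ℝ) (i : V) : dN G (fun j => r • X j) Y i = |r| * dN G X Y i :=
  dFun_smul X Y r i _

end ScaleInvariance

lemma mul_sub_mul_div_max_mul {K : Type*} [Field K] [LinearOrder K] [IsStrictOrderedRing K]
    {a : K} (ha : 0 < a) (x y : K) :
    (a * x - a * y) / max (a * x) (a * y) = (x - y) / max x y := by
  rw [← mul_sub, ← mul_max_of_nonneg _ _ ha.le, mul_div_mul_left _ _ ha.ne']

theorem node_level_CFH_scale_invariant_general {V : Type*} [Fintype V] [DecidableEq V] {k c : ℕ}
    (G : SimpleGraph V) (X : V → EuclideanSpace ℝ (Fin k)) (Y : V → Fin c)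
    (r : ℝ) (hr : r ≠ 0) (i : V) :
    hvNorm G (fun j => r • X j) Y i = hvNorm G X Y i := by
  simp only [hvNorm, hv, bFun_smul, dN_smul]
  exact mul_sub_mul_div_max_mul (abs_pos.mpr hr) _ _

/-- Lemma 3.2, node level. The normalized node-level CFH is invariant
under rescaling all node features by a nonzero real scalar. -/
theorem node_level_CFH_scale_invariant {V : Type*} [Fintype V] [DecidableEq V] {k c : ℕ}
    (G : SimpleGraph V) (X : V → EuclideanSpace ℝ (Fin k)) (Y : V → Fin c)
    (hNoIso : ∀ v : V, (nbr G v).Nonempty) (r : ℝ) (hr : r ≠ 0) (i : V) :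
    hvNorm G (fun j => r • X j) Y i = hvNorm G X Y i :=
  node_level_CFH_scale_invariant_general G X Y r hr i
end

section
/- Monotonicity of node-level CFH in the neighbor distance: for every a ∈ (0, 1) and every C > 0, the function f : [0, ∞) → ℝ defined by f(K) = ((a − 1)K + C) / max(aK + C, K) is strictly decreasing. (Here K plays the role of the mean neighbor distance d(v_i, N_i), a = |N_i| / (|V| − 1), and aK + C plays the role of the homophily baseline b(v_i) when the class-controlled features of all non-neighbors of v_i are fixed, so that h̃^(v)_i = f(d(v_i, N_i)) is monotonically decreasing in d(v_i, N_i).) -/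
/-!
Writing `b = a K + C`, the value is `(b - K) / max b K = φ (K / b)` with `φ t = (1 - t) / max 1 t`.
The profile `φ` is `1 - t` up to `t = 1` and `1 / t - 1` from there on, so it is strictly
decreasing on all of `ℝ`, while the ratio `K / (a K + C)` is strictly increasing in `K ≥ 0`
because `C > 0`.
-/

open Set

theorem strictAnti_one_sub_div_max_one : StrictAnti fun t : ℝ => (1 - t) / max 1 t := by
  refine StrictAntiOn.Iic_union_Ici (a := 1) (fun s hs t ht hst => ?_) (fun s hs t ht hst => ?_)
  · simp only [max_eq_left (mem_Iic.mp hs), max_eq_left (mem_Iic.mp ht), div_one]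
    linarith
  · have hs1 : (1 : ℝ) ≤ s := hs
    have ht1 : (1 : ℝ) ≤ t := ht
    simp only [max_eq_right hs1, max_eq_right ht1, sub_div, div_self (by positivity : s ≠ 0),
      div_self (by positivity : t ≠ 0)]
    gcongr

theorem sub_div_max_eq_of_pos {b : ℝ} (hb : 0 < b) (K : ℝ) :
    (b - K) / max b K = (1 - K / b) / max 1 (K / b) := by
  have hmax : max 1 (K / b) = max b K / b := by
    rw [← max_div_div_right hb.le, div_self hb.ne']
  rw [hmax]
  field_simp

theorem strictMonoOn_div_mul_add {a C : ℝ} (ha : 0 ≤ a) (hC : 0 < C) :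
    StrictMonoOn (fun K : ℝ => K / (a * K + C)) (Ici 0) := by
  intro x hx y hy hxy
  have hx' : 0 < a * x + C := add_pos_of_nonneg_of_pos (mul_nonneg ha hx) hC
  have hy' : 0 < a * y + C := add_pos_of_nonneg_of_pos (mul_nonneg ha hy) hC
  rw [div_lt_div_iff₀ hx' hy']
  linarith [mul_lt_mul_of_pos_left hxy hC]

/-- Lemma 3.3, monotonicity of node-level CFH in the neighbor distance.
For every `a ∈ (0, 1)` and every `C > 0`, the function
`K ↦ ((a - 1) * K + C) / max (a * K + C) K` is strictly decreasing on `[0, ∞)`.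
Here `K` plays the role of the mean neighbor distance `d(v_i, N_i)`,
`a = |N_i| / (|V| - 1)`, and `a * K + C` is the homophily baseline `b(v_i)` when the
class-controlled features of all non-neighbors of `v_i` are fixed, so that the normalized
node-level CFH `h̃^(v)_i` is a monotonically decreasing function of `d(v_i, N_i)`. -/
theorem node_level_CFH_monotone (a C : ℝ) (ha : a ∈ Set.Ioo (0 : ℝ) 1) (hC : 0 < C) :
    StrictAntiOn (fun K : ℝ => ((a - 1) * K + C) / max (a * K + C) K) (Set.Ici 0) := by
  refine (strictAnti_one_sub_div_max_one.comp_strictMonoOn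
    (strictMonoOn_div_mul_add ha.1.le hC)).congr fun K hK => ?_
  have hb : 0 < a * K + C := add_pos_of_nonneg_of_pos (mul_nonneg ha.1.le hK) hC
  rw [Function.comp_apply, ← sub_div_max_eq_of_pos hb]
  congr 1
  ring
end

section
/- Closed-form expected neighbor feature: for every a ∈ ℝ and τ ∈ ℝ, the mean of the probability density p(x) = φ(x) e^{−τ|a − x|} / Z(a, τ), where Z(a, τ) = ∫ φ(x) e^{−τ|a − x|} dx, satisfies ∫_{−∞}^{∞} x · p(x) dx = τ · (erfc((τ − a)/√2) − e^{2τa} · erfc((τ + a)/√2)) / (erfc((τ − a)/√2) + e^{2τa} · erfc((τ + a)/√2)). -/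
open MeasureTheory

/-- The standard Gaussian density `φ(x) = (1/√(2π)) e^{-x²/2}`. -/
noncomputable def phi (x : ℝ) : ℝ :=
  (Real.sqrt (2 * Real.pi))⁻¹ * Real.exp (-x ^ 2 / 2)

/-- The Gauss error function `erf(z) = (2/√π) ∫₀^z e^{-t²} dt`. -/
noncomputable def erf (z : ℝ) : ℝ :=
  (2 / Real.sqrt Real.pi) * ∫ t in (0 : ℝ)..z, Real.exp (-t ^ 2)

/-- The complementary error function `erfc(z) = 1 - erf(z)`. -/
noncomputable def erfc (z : ℝ) : ℝ := 1 - erf z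

/-!
On either side of `a` the tilted density `φ(x) e^{-τ|a-x|}` is a shifted Gaussian: completing the
square, for `x ≥ a` it equals `e^{τ²/2+τa} φ(x+τ)`, so its mass `R` on `(a, ∞)` is an `erfc` value,
and `x ↦ -x` turns the half-line `(-∞, a)` into the same problem for `-a`, with mass `L`.
Since `(x+τ) φ(x+τ) = -(φ(x+τ))'`, the moment `∫_{x>a} (x+τ) φ(x) e^{-τ(x-a)}` is the boundary
value `φ(a)`; the two boundary terms cancel, so the first moment is `τ (L - R)` while the
normalizer is `L + R`.
-/

open Real Set Filter Topology

lemma integral_Ioi_comp_add_right {E : Type*} [NormedAddCommGroup E] [NormedSpace ℝ E]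
    (f : ℝ → E) (c d : ℝ) : ∫ x in Ioi c, f (x + d) = ∫ x in Ioi (c + d), f x := by
  simpa using (measurePreserving_add_right volume d).setIntegral_preimage_emb
    (measurableEmbedding_addRight d) f (Ioi (c + d))

lemma integrableOn_Iic_iff_comp_neg {E : Type*} [NormedAddCommGroup E] {f : ℝ → E} (c : ℝ) :
    IntegrableOn f (Iic c) ↔ IntegrableOn (fun x => f (-x)) (Ioi (-c)) := by
  rw [← (Measure.measurePreserving_neg (volume : Measure ℝ)).integrableOn_comp_preimage
      (Homeomorph.neg ℝ).measurableEmbedding]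
  simp [Function.comp_def, integrableOn_Ici_iff_integrableOn_Ioi]

lemma phi_eq_gaussian : phi = fun x => (√(2 * π))⁻¹ * exp (-(1 / 2) * x ^ 2) := by
  ext x; rw [phi]; ring_nf

lemma phi_neg (x : ℝ) : phi (-x) = phi x := by
  simp [phi]

lemma integrable_phi : Integrable phi := by
  rw [phi_eq_gaussian]
  exact (integrable_exp_neg_mul_sq (by norm_num : (0 : ℝ) < 1 / 2)).const_mul _

lemma integrable_mul_phi : Integrable fun x => x * phi x := by
  simpa only [phi_eq_gaussian, mul_left_comm _ (√(2 * π))⁻¹] using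
    (integrable_mul_exp_neg_mul_sq (by norm_num : (0 : ℝ) < 1 / 2)).const_mul (√(2 * π))⁻¹

lemma hasDerivAt_phi (x : ℝ) : HasDerivAt phi (-(x * phi x)) x := by
  rw [phi_eq_gaussian]
  exact (((hasDerivAt_pow 2 x).const_mul _).exp.const_mul _).congr_deriv (by push_cast; ring)

lemma tendsto_phi_atTop : Tendsto phi atTop (𝓝 0) := by
  have h : Tendsto (fun x : ℝ => -x ^ 2 / 2) atTop atBot :=
    (tendsto_neg_atTop_atBot.comp (tendsto_pow_atTop two_ne_zero)).atBot_div_const two_pos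
  have := (tendsto_exp_atBot.comp h).const_mul (√(2 * π))⁻¹
  rw [mul_zero] at this
  exact this

lemma integral_Ioi_mul_phi (c : ℝ) : ∫ x in Ioi c, x * phi x = phi c := by
  have := integral_Ioi_of_hasDerivAt_of_tendsto' (a := c) (f := fun x => -phi x)
    (fun x _ => (hasDerivAt_phi x).neg) (by simpa using integrable_mul_phi.integrableOn)
    (by simpa using tendsto_phi_atTop.neg)
  simpa using this

lemma integral_Ioi_zero_phi : ∫ x in Ioi 0, phi x = 1 / 2 := by
  rw [phi_eq_gaussian, integral_const_mul, integral_gaussian_Ioi, div_div_eq_mul_div, div_one]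
  have : (0 : ℝ) < √(π * 2) := by positivity
  rw [mul_comm π 2]
  field_simp

lemma integral_zero_to_phi (c : ℝ) : ∫ x in 0..c, phi x = erf (c / √2) / 2 := by
  have hs : √2 ≠ 0 := by positivity
  have h := intervalIntegral.integral_comp_div (fun t => exp (-t ^ 2)) hs (a := 0) (b := c)
  simp only [div_pow, sq_sqrt (zero_le_two : (0 : ℝ) ≤ 2), zero_div] at h
  have hphi : ∫ x in 0..c, phi x = (√(2 * π))⁻¹ * ∫ x in 0..c, exp (-(x ^ 2 / 2)) := by
    simp only [phi, neg_div]
    exact intervalIntegral.integral_const_mul ..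
  have : 0 < √π := by positivity
  rw [hphi, h, erf, smul_eq_mul, sqrt_mul zero_le_two]
  field_simp

lemma integral_Ioi_phi (c : ℝ) : ∫ x in Ioi c, phi x = erfc (c / √2) / 2 := by
  have := intervalIntegral.integral_Ioi_sub_Ioi' integrable_phi.integrableOn
    integrable_phi.integrableOn (a := 0) (b := c)
  rw [integral_Ioi_zero_phi, integral_zero_to_phi] at this
  rw [erfc]; linarith

noncomputable def tilted (a τ x : ℝ) : ℝ := phi x * exp (-τ * |a - x|)

lemma tilted_neg (a τ x : ℝ) : tilted a τ (-x) = tilted (-a) τ x := by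
  rw [tilted, tilted, phi_neg, sub_neg_eq_add, ← abs_neg (-a - x)]
  ring_nf

lemma tilted_self (a τ : ℝ) : tilted a τ a = phi a := by
  simp [tilted]

lemma tilted_of_le {a x : ℝ} (τ : ℝ) (h : a ≤ x) :
    tilted a τ x = exp (τ ^ 2 / 2 + τ * a) * phi (x + τ) := by
  rw [tilted, abs_of_nonpos (sub_nonpos.2 h), phi, phi, mul_left_comm, mul_assoc, ← exp_add,
    ← exp_add]
  ring_nf

lemma integrableOn_Ioi_tilted (a τ : ℝ) : IntegrableOn (tilted a τ) (Ioi a) :=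
  ((integrable_phi.comp_add_right τ).const_mul _).integrableOn.congr_fun
    (fun _ hx => (tilted_of_le τ (le_of_lt hx)).symm) measurableSet_Ioi

lemma integrableOn_Ioi_mul_tilted (a τ : ℝ) :
    IntegrableOn (fun x => x * tilted a τ x) (Ioi a) := by
  have h : Integrable fun x => (x + τ) * phi (x + τ) - τ * phi (x + τ) :=
    (integrable_mul_phi.comp_add_right τ).sub ((integrable_phi.comp_add_right τ).const_mul τ)
  refine (h.const_mul (exp (τ ^ 2 / 2 + τ * a))).integrableOn.congr_fun (fun x hx => ?_)
    measurableSet_Ioi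
  rw [tilted_of_le τ (le_of_lt hx)]
  ring

lemma integral_Ioi_tilted (a τ : ℝ) :
    ∫ x in Ioi a, tilted a τ x = exp (τ ^ 2 / 2 + τ * a) * erfc ((τ + a) / √2) / 2 := by
  rw [setIntegral_congr_fun measurableSet_Ioi (fun x hx => tilted_of_le τ (le_of_lt hx)),
    integral_const_mul, integral_Ioi_comp_add_right phi, integral_Ioi_phi, add_comm a τ]
  ring

lemma integral_Ioi_mul_tilted (a τ : ℝ) :
    ∫ x in Ioi a, x * tilted a τ x = phi a - τ * ∫ x in Ioi a, tilted a τ x := by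
  have h : ∫ x in Ioi a, (x + τ) * tilted a τ x = phi a := by
    rw [setIntegral_congr_fun measurableSet_Ioi
        (fun x hx => by rw [tilted_of_le τ (le_of_lt hx), mul_left_comm]),
      integral_const_mul, integral_Ioi_comp_add_right (fun x => x * phi x), integral_Ioi_mul_phi,
      ← tilted_of_le τ le_rfl, tilted_self]
  have hsplit : ∫ x in Ioi a, (x + τ) * tilted a τ x
      = (∫ x in Ioi a, x * tilted a τ x) + τ * ∫ x in Ioi a, tilted a τ x := by
    simp_rw [add_mul]
    rw [integral_add (integrableOn_Ioi_mul_tilted a τ) ((integrableOn_Ioi_tilted a τ).const_mul τ),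
      integral_const_mul]
  linarith

lemma integrableOn_Iic_tilted (a τ : ℝ) : IntegrableOn (tilted a τ) (Iic a) := by
  simpa only [integrableOn_Iic_iff_comp_neg, tilted_neg] using integrableOn_Ioi_tilted (-a) τ

lemma integrableOn_Iic_mul_tilted (a τ : ℝ) :
    IntegrableOn (fun x => x * tilted a τ x) (Iic a) := by
  rw [integrableOn_Iic_iff_comp_neg]
  simp only [tilted_neg, neg_mul]
  exact (integrableOn_Ioi_mul_tilted (-a) τ).neg

lemma integral_Iic_tilted (a τ : ℝ) :
    ∫ x in Iic a, tilted a τ x = ∫ x in Ioi (-a), tilted (-a) τ x := by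
  simpa only [neg_neg, tilted_neg] using (integral_comp_neg_Ioi (-a) (tilted a τ)).symm

lemma integral_Iic_mul_tilted (a τ : ℝ) :
    ∫ x in Iic a, x * tilted a τ x = -∫ x in Ioi (-a), x * tilted (-a) τ x := by
  simpa only [neg_neg, tilted_neg, neg_mul, integral_neg] using
    (integral_comp_neg_Ioi (-a) (fun x => x * tilted a τ x)).symm

lemma integral_tilted (a τ : ℝ) :
    ∫ x, tilted a τ x = (∫ x in Ioi (-a), tilted (-a) τ x) + ∫ x in Ioi a, tilted a τ x := by
  rw [← intervalIntegral.integral_Iic_add_Ioi (integrableOn_Iic_tilted a τ)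
    (integrableOn_Ioi_tilted a τ), integral_Iic_tilted]

lemma integral_mul_tilted (a τ : ℝ) :
    ∫ x, x * tilted a τ x =
      τ * ((∫ x in Ioi (-a), tilted (-a) τ x) - ∫ x in Ioi a, tilted a τ x) := by
  rw [← intervalIntegral.integral_Iic_add_Ioi (integrableOn_Iic_mul_tilted a τ)
    (integrableOn_Ioi_mul_tilted a τ), integral_Iic_mul_tilted, integral_Ioi_mul_tilted,
    integral_Ioi_mul_tilted, phi_neg]
  ring

/-- closed-form expected neighbor feature in the CSBM-X analysis:
the mean of the density `p(x) = φ(x) e^{-τ|a-x|} / Z(a,τ)`, where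
`Z(a,τ) = ∫ φ(x) e^{-τ|a-x|} dx`, equals
`τ (erfc((τ-a)/√2) - e^{2τa} erfc((τ+a)/√2)) / (erfc((τ-a)/√2) + e^{2τa} erfc((τ+a)/√2))`. -/
theorem expected_neighbor_feature_closed_form (a τ : ℝ) :
    (∫ x : ℝ, x * (phi x * Real.exp (-τ * |a - x|) /
        ∫ y : ℝ, phi y * Real.exp (-τ * |a - y|))) =
      τ * (erfc ((τ - a) / Real.sqrt 2) -
            Real.exp (2 * τ * a) * erfc ((τ + a) / Real.sqrt 2)) /
        (erfc ((τ - a) / Real.sqrt 2) +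
          Real.exp (2 * τ * a) * erfc ((τ + a) / Real.sqrt 2)) := by
  change ∫ x, x * (tilted a τ x / ∫ y, tilted a τ y) = _
  simp_rw [← mul_div_assoc]
  rw [integral_div, integral_mul_tilted, integral_tilted, integral_Ioi_tilted, integral_Ioi_tilted,
    ← sub_eq_add_neg]
  have hc : exp (τ ^ 2 / 2 - τ * a) / 2 ≠ 0 := by positivity
  have hL : exp (τ ^ 2 / 2 + τ * -a) * erfc ((τ - a) / √2) / 2
      = exp (τ ^ 2 / 2 - τ * a) / 2 * erfc ((τ - a) / √2) := by
    rw [mul_neg, ← sub_eq_add_neg]; ring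
  have hR : exp (τ ^ 2 / 2 + τ * a) * erfc ((τ + a) / √2) / 2
      = exp (τ ^ 2 / 2 - τ * a) / 2 * (exp (2 * τ * a) * erfc ((τ + a) / √2)) := by
    rw [show τ ^ 2 / 2 + τ * a = τ ^ 2 / 2 - τ * a + 2 * τ * a by ring, exp_add]; ring
  rw [hL, hR, ← mul_sub, ← mul_add, mul_left_comm, mul_div_mul_left _ _ hc]
end

section
/- An erfc inequality (positivity of the expected neighbor feature): for all τ > 0 and a > 0, erfc((τ − a)/√2) > e^{2τa} · erfc((τ + a)/√2). -/
open MeasureTheory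

/-!
Writing `erfc z = (2/√π) ∫_z^∞ e^{-t²} dt` and translating the tail `∫_{z+c}^∞` back to `[z, ∞)`,
the factor `e^{c(2z+c)}` turns the integrand `e^{-(s+c)²}` into `e^{-s²} e^{-2c(s-z)}`, which is
strictly below `e^{-s²}` for `s > z` as soon as `c > 0`. The theorem is the case
`z = (τ - a)/√2`, `c = √2 a`, where `c (2z + c) = 2τa`.
-/

open Set Real

theorem integral_lt_integral_of_ae_lt {α : Type*} [MeasurableSpace α] {μ : Measure α}
    {f g : α → ℝ} (hμ : μ ≠ 0) (hf : Integrable f μ) (hg : Integrable g μ)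
    (hfg : ∀ᵐ x ∂μ, f x < g x) : ∫ x, f x ∂μ < ∫ x, g x ∂μ := by
  rw [← sub_pos, ← integral_sub hg hf]
  refine (integral_pos_iff_support_of_nonneg_ae ?_ (hg.sub hf)).2
    (pos_iff_ne_zero.2 fun hsupport ↦ hμ ?_)
  · filter_upwards [hfg] with x hx using (sub_pos.2 hx).le
  · have hzero : ∀ᵐ x ∂μ, g x - f x = 0 := hsupport
    rw [← ae_eq_bot, ← Filter.eventually_false_iff_eq_bot]
    filter_upwards [hfg, hzero] with x hlt heq
    linarith

theorem integral_Ioi_add_right (f : ℝ → ℝ) (z c : ℝ) :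
    ∫ t in Ioi (z + c), f t = ∫ s in Ioi z, f (s + c) := by
  rw [← (measurePreserving_add_right volume c).setIntegral_preimage_emb
    (measurableEmbedding_addRight c), preimage_add_const_Ioi, add_sub_cancel_right]

theorem integrable_exp_neg_sq : Integrable fun t : ℝ ↦ exp (-t ^ 2) := by
  simpa using integrable_exp_neg_mul_sq one_pos

theorem erfc_eq_integral_Ioi (z : ℝ) :
    erfc z = 2 / √π * ∫ t in Ioi z, exp (-t ^ 2) := by
  have hhalf : ∫ t in Ioi (0 : ℝ), exp (-t ^ 2) = √π / 2 := by
    simpa using integral_gaussian_Ioi 1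
  have hπ : √π ≠ 0 := by positivity
  rw [erfc, erf, ← intervalIntegral.integral_Ioi_sub_Ioi' integrable_exp_neg_sq.integrableOn
    integrable_exp_neg_sq.integrableOn, hhalf]
  field_simp
  ring

theorem exp_mul_integral_Ioi_add_lt (z : ℝ) {c : ℝ} (hc : 0 < c) :
    exp (c * (2 * z + c)) * ∫ t in Ioi (z + c), exp (-t ^ 2) < ∫ t in Ioi z, exp (-t ^ 2) := by
  rw [integral_Ioi_add_right, ← integral_const_mul]
  refine integral_lt_integral_of_ae_lt (by simp [Real.volume_Ioi])
    ((integrable_exp_neg_sq.comp_add_right c).const_mul _).integrableOn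
    integrable_exp_neg_sq.integrableOn ?_
  filter_upwards [ae_restrict_mem measurableSet_Ioi] with s hs
  rw [← exp_add, exp_lt_exp]
  nlinarith [mul_pos hc (sub_pos.2 (mem_Ioi.1 hs))]

theorem exp_mul_erfc_add_lt (z : ℝ) {c : ℝ} (hc : 0 < c) :
    exp (c * (2 * z + c)) * erfc (z + c) < erfc z := by
  rw [erfc_eq_integral_Ioi, erfc_eq_integral_Ioi, mul_left_comm]
  exact mul_lt_mul_of_pos_left (exp_mul_integral_Ioi_add_lt z hc) (by positivity)

theorem erfc_tilt_inequality_general (τ a : ℝ) (ha : 0 < a) :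
    Real.exp (2 * τ * a) * erfc ((τ + a) / Real.sqrt 2) <
      erfc ((τ - a) / Real.sqrt 2) := by
  have h2 : √2 ≠ 0 := by positivity
  have hsq : √2 ^ 2 = 2 := sq_sqrt zero_le_two
  have hshift : (τ + a) / √2 = (τ - a) / √2 + √2 * a := by
    field_simp
    linear_combination -a * hsq
  have htilt : 2 * τ * a = √2 * a * (2 * ((τ - a) / √2) + √2 * a) := by
    field_simp
    linear_combination -a * hsq
  rw [hshift, htilt]
  exact exp_mul_erfc_add_lt _ (by positivity)

/-- an erfc inequality, positivity of the expected neighbor feature in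
the proof of Theorem 4.1: for all `τ > 0` and `a > 0`,
`erfc((τ-a)/√2) > e^{2τa} erfc((τ+a)/√2)`. -/
theorem erfc_tilt_inequality (τ a : ℝ) (hτ : 0 < τ) (ha : 0 < a) :
    Real.exp (2 * τ * a) * erfc ((τ + a) / Real.sqrt 2) <
      erfc ((τ - a) / Real.sqrt 2) :=
  erfc_tilt_inequality_general τ a ha
end
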